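/- arXiv:1603.01859 — 2 statements merged into one kernel-verified Lean document; each statement's English description precedes it below -/
import Mathlib

section
/- Let t > 1 be odd and let G = ℤ_t × ℤ_2 × ℤ_2, with elements indexed by ι : {1,…,4t} → G, ι(k) = (⌊(k−1)/4⌋ mod t, ⌊((k−1) mod 4)/2⌋ mod 2, (k−1) mod 2). Let ρ : G × G → {1,−1} be given by ρ((a,b,c),(a',b',c')) = (−1)^{b·b' + b·c' + c·c'} (so that the matrix of ρ equals 1_t ⊗ [[1,1,1,1],[1,−1,1,−1],[1,−1,−1,1],[1,1,−1,−1]]), and let S = {ι(k) : 2 ≤ k ≤ 4t−2} = G ∖ {(0,0,0), (t−1,1,0), (t−1,1,1)}. In ℚ[x_d : d ∈ S], let J be the ideal generated by x_d² − x_d for all d ∈ S together with, for each s ∈ {5, 6, …, 2t+2}, the polynomial Σ_{h∈G} ρ(ι(s),h) · ∏_{d ∈ S ∩ {h, ι(s)·h}} (1 − 2x_d). Then a point a : S → ℚ lies in the affine variety V(J) if and only if a_d ∈ {0,1} for every d ∈ S and the cocyclic matrix of ψ(g,h) = ρ(g,h)·∏_{d∈S} ∂_d(g,h)^{a_d} is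 Hadamard. -/
open Matrix MvPolynomial

/-- The group `ℤ_t × ℤ_2 × ℤ_2` (written additively). -/
abbrev GZ (t : ℕ) := ZMod t × ZMod 2 × ZMod 2

/-- The characteristic map `δ_d`. -/
def charMap {A : Type*} [DecidableEq A] (d x : A) : ℤ := if x = d then -1 else 1

/-- The elementary coboundary `∂_d` (additive notation). -/
def elemCob {A : Type*} [AddGroup A] [DecidableEq A] (d g h : A) : ℤ :=
  charMap d g * charMap d h * charMap d (g + h)

/-- The indexing `ι : {1,…,4t} → ℤ_t × ℤ_2 × ℤ_2` of the paper. -/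
def iota (t : ℕ) (k : ℕ) : GZ t :=
  ((((k - 1) / 4 : ℕ) : ZMod t), ((((k - 1) % 4) / 2 : ℕ) : ZMod 2), (((k - 1) % 2 : ℕ) : ZMod 2))

/-- The fixed representative cocycle `ρ((a,b,c),(a',b',c')) = (−1)^{b·b' + b·c' + c·c'}`,
whose matrix is `1_t ⊗ [[1,1,1,1],[1,−1,1,−1],[1,−1,−1,1],[1,1,−1,−1]]`. -/
def rhoZ (t : ℕ) (p q : GZ t) : ℤ :=
  (-1) ^ (p.2.1.val * q.2.1.val + p.2.1.val * q.2.2.val + p.2.2.val * q.2.2.val)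

/-- The coboundary index set `S = G ∖ {(0,0,0), (t−1,1,0), (t−1,1,1)}`. -/
def SZ (t : ℕ) [NeZero t] : Finset (GZ t) :=
  Finset.univ \ {((0 : ZMod t), (0 : ZMod 2), (0 : ZMod 2)),
    (((t - 1 : ℕ) : ZMod t), (1 : ZMod 2), (0 : ZMod 2)),
    (((t - 1 : ℕ) : ZMod t), (1 : ZMod 2), (1 : ZMod 2))}

/-- The row polynomial `Σ_{h∈G} ρ(ι(s),h) · ∏_{d ∈ S ∩ {h, ι(s)+h}} (1 - 2x_d)`. -/
noncomputable def rowPolyZ (t : ℕ) [NeZero t] (s : ℕ) :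
    MvPolynomial {d : GZ t // d ∈ SZ t} ℚ :=
  ∑ h : GZ t, MvPolynomial.C ((rhoZ t (iota t s) h : ℤ) : ℚ) *
    ∏ d : {d : GZ t // d ∈ SZ t},
      if (d : GZ t) = h ∨ (d : GZ t) = iota t s + h then (1 - 2 * MvPolynomial.X d) else 1

/-- The ideal `J_{ℤ_t×ℤ_2²}` of Theorem 4. -/
noncomputable def idealZ (t : ℕ) [NeZero t] : Ideal (MvPolynomial {d : GZ t // d ∈ SZ t} ℚ) :=
  Ideal.span
    ({p | ∃ d : {d : GZ t // d ∈ SZ t}, p = MvPolynomial.X d ^ 2 - MvPolynomial.X d} ∪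
     {p | ∃ s : ℕ, 5 ≤ s ∧ s ≤ 2 * t + 2 ∧ p = rowPolyZ t s})

/-!
`ψ = ρ · ∏_{a_d = 1} ∂_d` is a normalized `±1`-cocycle, so by the cocycle identity the
`(g, g')` entry of `M_ψ M_ψᵀ` is `ψ(g - g', g') · R(g - g')`, where `R(e) = Σ_h ψ(e, h)`.
Hence `M_ψ` is Hadamard iff `R(e) = 0` for all `e ≠ 0`; moreover `R(-e) = ±R(e)`.
If `e ∈ 0 × ℤ_2²` is nonzero, `h ↦ ψ(e, h)` changes sign under `h ↦ e + h`, so `R(e) = 0`.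
Otherwise, `t` being odd, `e` or `-e` has first coordinate in `[1, t/2)`, i.e. equals `ι(s)`
for some `5 ≤ s ≤ 2t + 2`. At a `{0,1}`-point the row polynomial of `ι(s)` evaluates to
`R(ι(s))` up to the sign `∏_{a_d = 1} δ_d(ι(s))`.
-/

structure IsNormalizedCocycle {A : Type*} [AddMonoid A] (ψ : A → A → ℤ) : Prop where
  mul_self : ∀ g h, ψ g h * ψ g h = 1
  cocycle : ∀ g h k, ψ g h * ψ (g + h) k = ψ h k * ψ g (h + k)
  zero_left : ∀ h, ψ 0 h = 1

def rowSum {A : Type*} [Fintype A] (ψ : A → A → ℤ) (e : A) : ℤ := ∑ h, ψ e h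

namespace IsNormalizedCocycle

section Closure

variable {A : Type*} [AddMonoid A]

theorem one : IsNormalizedCocycle (fun _ _ : A => (1 : ℤ)) :=
  ⟨fun _ _ => one_mul 1, fun _ _ _ => rfl, fun _ => rfl⟩

theorem mul {ψ φ : A → A → ℤ} (hψ : IsNormalizedCocycle ψ) (hφ : IsNormalizedCocycle φ) :
    IsNormalizedCocycle (fun g h => ψ g h * φ g h) where
  mul_self g h := by rw [mul_mul_mul_comm, hψ.mul_self, hφ.mul_self, one_mul]
  cocycle g h k := by
    rw [mul_mul_mul_comm, hψ.cocycle, hφ.cocycle, mul_mul_mul_comm]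
  zero_left h := by rw [hψ.zero_left, hφ.zero_left, one_mul]

theorem prod {ι : Type*} (s : Finset ι) {ψ : ι → A → A → ℤ}
    (hψ : ∀ i ∈ s, IsNormalizedCocycle (ψ i)) :
    IsNormalizedCocycle (fun g h => ∏ i ∈ s, ψ i g h) := by
  classical
  induction s using Finset.induction_on with
  | empty => exact one
  | insert i s hi ih =>
    simp only [Finset.prod_insert hi]
    exact (hψ i (s.mem_insert_self i)).mul
      (ih fun j hj => hψ j (Finset.mem_insert_of_mem hj))

theorem comp {B : Type*} [AddMonoid B] {ψ : B → B → ℤ} (hψ : IsNormalizedCocycle ψ)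
    (f : A →+ B) : IsNormalizedCocycle (fun g h => ψ (f g) (f h)) where
  mul_self g h := hψ.mul_self (f g) (f h)
  cocycle g h k := by simpa only [map_add] using hψ.cocycle (f g) (f h) (f k)
  zero_left h := by rw [map_zero, hψ.zero_left]

theorem zero_right {ψ : A → A → ℤ} (hψ : IsNormalizedCocycle ψ) (g : A) : ψ g 0 = 1 := by
  have h := hψ.cocycle g 0 0
  rw [add_zero, add_zero, hψ.zero_left, one_mul, hψ.mul_self] at h
  exact h.symm

end Closure

section RowSums

variable {A : Type*} [AddGroup A] [Fintype A] {ψ : A → A → ℤ}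

theorem rowSum_zero (hψ : IsNormalizedCocycle ψ) : rowSum ψ 0 = Fintype.card A := by
  simp [rowSum, hψ.zero_left]

theorem sum_mul_eq_mul_rowSum (hψ : IsNormalizedCocycle ψ) (g g' : A) :
    ∑ h, ψ g h * ψ g' h = ψ (g - g') g' * rowSum ψ (g - g') := by
  have shift : ∀ h, ψ g h * ψ g' h = ψ (g - g') g' * ψ (g - g') (g' + h) := fun h => by
    have hc := hψ.cocycle (g - g') g' h
    rw [sub_add_cancel] at hc
    linear_combination (ψ g' h * ψ (g - g') g') * hc - (ψ g h * ψ g' h) * hψ.mul_self (g - g') g'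
      + (ψ (g - g') g' * ψ (g - g') (g' + h)) * hψ.mul_self g' h
  rw [Fintype.sum_congr _ _ shift, ← Finset.mul_sum, rowSum]
  exact congrArg _ (Equiv.sum_comp (Equiv.addLeft g') (ψ (g - g')))

theorem rowSum_eq_mul_rowSum_neg (hψ : IsNormalizedCocycle ψ) (e : A) :
    rowSum ψ e = ψ (-e) e * rowSum ψ (-e) := by
  show ∑ h, ψ e h = _
  simpa [hψ.zero_left] using hψ.sum_mul_eq_mul_rowSum 0 e

theorem rowSum_eq_zero_of_add_left_eq_neg {e : A} (he : ∀ h, ψ e (e + h) = -ψ e h) :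
    rowSum ψ e = 0 := by
  have h := Equiv.sum_comp (Equiv.addLeft e) (ψ e)
  simp only [Equiv.coe_addLeft, he, Finset.sum_neg_distrib] at h
  rw [rowSum]
  omega

variable [DecidableEq A]

theorem mul_transpose_eq_card_smul_one_iff (hψ : IsNormalizedCocycle ψ) :
    of ψ * (of ψ)ᵀ = (Fintype.card A : ℤ) • 1 ↔ ∀ e ≠ 0, rowSum ψ e = 0 := by
  have entry : ∀ g g', (of ψ * (of ψ)ᵀ) g g' = ψ (g - g') g' * rowSum ψ (g - g') :=
    fun g g' => by simp [Matrix.mul_apply, hψ.sum_mul_eq_mul_rowSum]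
  constructor
  · intro hM e he
    simpa [entry, hψ.zero_right, Matrix.one_apply_ne he] using congrFun (congrFun hM e) 0
  · intro hR
    ext g g'
    rw [entry, Matrix.smul_apply]
    rcases eq_or_ne g g' with rfl | hne
    · simp [hψ.zero_left, hψ.rowSum_zero]
    · simp [hR _ (sub_ne_zero_of_ne hne), Matrix.one_apply_ne hne]

end RowSums

end IsNormalizedCocycle

section Coboundary

variable {A : Type*} [DecidableEq A]

theorem charMap_mul_self (d x : A) : charMap d x * charMap d x = 1 := by
  unfold charMap; split <;> norm_num

theorem charMap_ne_zero (d x : A) : charMap d x ≠ 0 := by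
  unfold charMap; split <;> norm_num

variable [AddGroup A]

theorem isNormalizedCocycle_elemCob {d : A} (hd : d ≠ 0) :
    IsNormalizedCocycle (elemCob d) where
  mul_self g h := by
    simp only [elemCob, mul_mul_mul_comm _ (charMap d (g + h)), mul_mul_mul_comm (charMap d g),
      charMap_mul_self, mul_one]
  cocycle g h k := by
    simp only [elemCob, ← add_assoc]
    linear_combination (charMap d g * charMap d h * charMap d k * charMap d (g + h + k)) *
      (charMap_mul_self d (g + h) - charMap_mul_self d (h + k))
  zero_left h := by
    rw [elemCob, zero_add, charMap, if_neg hd.symm, one_mul, charMap_mul_self]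

theorem elemCob_add_left_of_add_self {e : A} (he : e + e = 0) (d h : A) :
    elemCob d e (e + h) = elemCob d e h := by
  rw [elemCob, elemCob, ← add_assoc, he, zero_add, mul_right_comm]

theorem charMap_mul_charMap_add {e : A} (he : e ≠ 0) (d h : A) :
    charMap d h * charMap d (e + h) = if d = h ∨ d = e + h then -1 else 1 := by
  have : ¬(h = d ∧ e + h = d) := fun ⟨h1, h2⟩ => he (by simpa [h1] using h2)
  unfold charMap
  by_cases h1 : h = d <;> by_cases h2 : e + h = d <;> simp_all [eq_comm]

theorem cast_ite_elemCob {e : A} (he : e ≠ 0) {x : ℚ} (hx : x = 0 ∨ x = 1) (d h : A) :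
    ((if x = 1 then elemCob d e h else 1 : ℤ) : ℚ) =
      ((if x = 1 then charMap d e else 1 : ℤ) : ℚ) *
        if d = h ∨ d = e + h then 1 - 2 * x else 1 := by
  rcases hx with rfl | rfl
  · simp
  · push_cast [elemCob, mul_assoc, charMap_mul_charMap_add he]
    split_ifs <;> norm_num at *

end Coboundary

theorem MvPolynomial.forall_mem_span_eval_eq_zero_iff {σ R : Type*} [CommRing R]
    (S : Set (MvPolynomial σ R)) (a : σ → R) :
    (∀ p ∈ Ideal.span S, eval a p = 0) ↔ ∀ p ∈ S, eval a p = 0 :=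
  ⟨fun h p hp => h p (Ideal.subset_span hp),
    fun h _ hp => (Ideal.span_le (I := RingHom.ker (eval a))).2 h hp⟩

theorem MvPolynomial.eval_X_sq_sub_X_eq_zero_iff {σ K : Type*} [Field K] (a : σ → K) (d : σ) :
    eval a (X d ^ 2 - X d) = 0 ↔ a d = 0 ∨ a d = 1 := by
  rw [map_sub, map_pow, eval_X, sq, ← mul_sub_one, mul_eq_zero, sub_eq_zero]

def kleinCocycle (x y : ZMod 2 × ZMod 2) : ℤ :=
  (-1) ^ (x.1.val * y.1.val + x.1.val * y.2.val + x.2.val * y.2.val)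

theorem isNormalizedCocycle_kleinCocycle : IsNormalizedCocycle kleinCocycle :=
  ⟨by decide, by decide, by decide⟩

theorem kleinCocycle_add_right_self :
    ∀ x y : ZMod 2 × ZMod 2, x ≠ 0 → kleinCocycle x (x + y) = -kleinCocycle x y := by
  decide

namespace GZ

variable {t : ℕ}

theorem rhoZ_eq_kleinCocycle (p q : GZ t) : rhoZ t p q = kleinCocycle p.2 q.2 := rfl

theorem isNormalizedCocycle_rhoZ : IsNormalizedCocycle (rhoZ t) :=
  isNormalizedCocycle_kleinCocycle.comp (AddMonoidHom.snd (ZMod t) (ZMod 2 × ZMod 2))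

theorem add_self_eq_zero_of_fst_eq_zero {e : GZ t} (he : e.1 = 0) : e + e = 0 := by
  have hklein : ∀ x : ZMod 2 × ZMod 2, x + x = 0 := by decide
  exact Prod.ext (by simp [he]) (hklein e.2)

theorem iota_ne_zero {s : ℕ} (hs5 : 5 ≤ s) (hs : s ≤ 2 * t + 2) : iota t s ≠ 0 := by
  intro h
  have hdvd : t ∣ (s - 1) / 4 := (ZMod.natCast_eq_zero_iff _ _).1 (congrArg Prod.fst h)
  have := Nat.eq_zero_of_dvd_of_lt hdvd (by omega)
  omega

variable [NeZero t]

theorem ne_zero_of_mem_SZ {d : GZ t} (hd : d ∈ SZ t) : d ≠ 0 := by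
  rintro rfl
  exact (Finset.mem_sdiff.1 hd).2 (Finset.mem_insert_self _ _)

def psiZ (a : {d : GZ t // d ∈ SZ t} → ℚ) (g h : GZ t) : ℤ :=
  rhoZ t g h * ∏ d : {d : GZ t // d ∈ SZ t}, (if a d = 1 then elemCob (d : GZ t) g h else 1)

theorem isNormalizedCocycle_psiZ (a : {d : GZ t // d ∈ SZ t} → ℚ) :
    IsNormalizedCocycle (psiZ a) := by
  have hcob (d : {d : GZ t // d ∈ SZ t}) :
      IsNormalizedCocycle fun g h => if a d = 1 then elemCob (d : GZ t) g h else 1 := by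
    by_cases hd : a d = 1
    · simpa only [hd, if_true] using isNormalizedCocycle_elemCob (ne_zero_of_mem_SZ d.2)
    · simpa only [hd, if_false] using IsNormalizedCocycle.one
  exact isNormalizedCocycle_rhoZ.mul (IsNormalizedCocycle.prod Finset.univ fun d _ => hcob d)

theorem psiZ_add_right_self (a : {d : GZ t // d ∈ SZ t} → ℚ) {e : GZ t} (he1 : e.1 = 0)
    (he : e ≠ 0) (h : GZ t) : psiZ a e (e + h) = -psiZ a e h := by
  have he2 : e.2 ≠ 0 := fun h2 => he (Prod.ext he1 h2)
  simp only [psiZ, rhoZ_eq_kleinCocycle, Prod.snd_add, kleinCocycle_add_right_self _ _ he2,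
    elemCob_add_left_of_add_self (add_self_eq_zero_of_fst_eq_zero he1), neg_mul]

theorem exists_iota_eq {A : ZMod t} (B C : ZMod 2) (hA0 : A ≠ 0) (hA : 2 * A.val < t) :
    ∃ s, 5 ≤ s ∧ s ≤ 2 * t + 2 ∧ iota t s = (A, B, C) := by
  have hA1 : 0 < A.val := ZMod.val_pos.2 hA0
  have hB := ZMod.val_lt B
  have hC := ZMod.val_lt C
  refine ⟨4 * A.val + 2 * B.val + C.val + 1, by omega, by omega, ?_⟩
  have h1 : (4 * A.val + 2 * B.val + C.val + 1 - 1) / 4 = A.val := by omega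
  have h2 : (4 * A.val + 2 * B.val + C.val + 1 - 1) % 4 / 2 = B.val := by omega
  have h3 : (4 * A.val + 2 * B.val + C.val + 1 - 1) % 2 = C.val := by omega
  simp only [iota, h1, h2, h3, ZMod.natCast_zmod_val]

theorem exists_iota_eq_or_eq_neg (ht : Odd t) {e : GZ t} (he : e.1 ≠ 0) :
    ∃ s, 5 ≤ s ∧ s ≤ 2 * t + 2 ∧ (iota t s = e ∨ iota t s = -e) := by
  have hlt := ZMod.val_lt e.1
  have hne : 2 * e.1.val ≠ t := fun h => Nat.not_even_iff_odd.2 ht ⟨e.1.val, by omega⟩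
  rcases lt_or_gt_of_ne hne with hsmall | hlarge
  · obtain ⟨s, hs5, hs, hs_eq⟩ := exists_iota_eq e.2.1 e.2.2 he hsmall
    exact ⟨s, hs5, hs, Or.inl hs_eq⟩
  · have hneg : (-e.1).val = t - e.1.val := by rw [ZMod.neg_val, if_neg he]
    obtain ⟨s, hs5, hs, hs_eq⟩ :=
      exists_iota_eq (-e.2.1) (-e.2.2) (neg_ne_zero.2 he) (by omega)
    exact ⟨s, hs5, hs, Or.inr hs_eq⟩

theorem eval_rowPolyZ (a : {d : GZ t // d ∈ SZ t} → ℚ) (s : ℕ) :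
    eval a (rowPolyZ t s) = ∑ h, (rhoZ t (iota t s) h : ℚ) *
      ∏ d : {d : GZ t // d ∈ SZ t},
        if (d : GZ t) = h ∨ (d : GZ t) = iota t s + h then 1 - 2 * a d else 1 := by
  simp [rowPolyZ, apply_ite]

theorem cast_rowSum_psiZ {a : {d : GZ t // d ∈ SZ t} → ℚ} (ha : ∀ d, a d = 0 ∨ a d = 1)
    {e : GZ t} (he : e ≠ 0) :
    (rowSum (psiZ a) e : ℚ) =
      ((∏ d : {d : GZ t // d ∈ SZ t}, if a d = 1 then charMap (d : GZ t) e else 1 : ℤ) : ℚ) *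
        ∑ h, (rhoZ t e h : ℚ) *
          ∏ d : {d : GZ t // d ∈ SZ t},
            if (d : GZ t) = h ∨ (d : GZ t) = e + h then 1 - 2 * a d else 1 := by
  rw [rowSum, Int.cast_sum, Finset.mul_sum]
  refine Fintype.sum_congr _ _ fun h => ?_
  push_cast [psiZ, cast_ite_elemCob he (ha _), Finset.prod_mul_distrib]
  ring

theorem eval_rowPolyZ_eq_zero_iff {a : {d : GZ t // d ∈ SZ t} → ℚ}
    (ha : ∀ d, a d = 0 ∨ a d = 1) {s : ℕ} (hs : iota t s ≠ 0) :
    eval a (rowPolyZ t s) = 0 ↔ rowSum (psiZ a) (iota t s) = 0 := by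
  have hsign : (∏ d : {d : GZ t // d ∈ SZ t},
      if a d = 1 then charMap (d : GZ t) (iota t s) else 1 : ℤ) ≠ 0 :=
    Finset.prod_ne_zero_iff.2 fun d _ => by
      split_ifs
      · exact charMap_ne_zero _ _
      · exact one_ne_zero
  rw [← Int.cast_eq_zero (α := ℚ), cast_rowSum_psiZ ha hs, eval_rowPolyZ, mul_eq_zero,
    Int.cast_eq_zero, or_iff_right hsign]

theorem forall_eval_rowPolyZ_iff (ht : Odd t) {a : {d : GZ t // d ∈ SZ t} → ℚ}
    (ha : ∀ d, a d = 0 ∨ a d = 1) :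
    (∀ s, 5 ≤ s → s ≤ 2 * t + 2 → eval a (rowPolyZ t s) = 0) ↔
      ∀ e ≠ 0, rowSum (psiZ a) e = 0 := by
  constructor
  · intro hrow e he
    by_cases he1 : e.1 = 0
    · exact IsNormalizedCocycle.rowSum_eq_zero_of_add_left_eq_neg
        (psiZ_add_right_self a he1 he)
    obtain ⟨s, hs5, hs, hse | hse⟩ := exists_iota_eq_or_eq_neg ht he1
    · rw [← hse, ← eval_rowPolyZ_eq_zero_iff ha (hse ▸ he)]
      exact hrow s hs5 hs
    · have hR := (eval_rowPolyZ_eq_zero_iff ha (hse ▸ neg_ne_zero.2 he)).1 (hrow s hs5 hs)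
      rw [(isNormalizedCocycle_psiZ a).rowSum_eq_mul_rowSum_neg, ← hse, hR, mul_zero]
  · intro hR s hs5 hs
    exact (eval_rowPolyZ_eq_zero_iff ha (iota_ne_zero hs5 hs)).2 (hR _ (iota_ne_zero hs5 hs))

theorem forall_mem_idealZ_eval_eq_zero_iff (a : {d : GZ t // d ∈ SZ t} → ℚ) :
    (∀ p ∈ idealZ t, eval a p = 0) ↔
      (∀ d, a d = 0 ∨ a d = 1) ∧ ∀ s, 5 ≤ s → s ≤ 2 * t + 2 → eval a (rowPolyZ t s) = 0 := by
  simp only [idealZ, forall_mem_span_eval_eq_zero_iff, Set.mem_union, or_imp, forall_and,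
    Set.mem_ofPred_eq, forall_exists_index, and_imp]
  rw [forall_comm, forall_comm (β := ℕ)]
  simp only [← imp_forall_iff, forall_eq, eval_X_sq_sub_X_eq_zero_iff]

end GZ

theorem mem_variety_idealZ_iff_general (t : ℕ) [NeZero t] (htodd : Odd t)
    (a : {d : GZ t // d ∈ SZ t} → ℚ) :
    (∀ p ∈ idealZ t, eval a p = 0) ↔
      (∀ d, a d = 0 ∨ a d = 1) ∧
      (Matrix.of fun g h : GZ t =>
            rhoZ t g h *
              ∏ d : {d : GZ t // d ∈ SZ t}, (if a d = 1 then elemCob (d : GZ t) g h else 1)) *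
          (Matrix.of fun g h : GZ t =>
            rhoZ t g h *
              ∏ d : {d : GZ t // d ∈ SZ t}, (if a d = 1 then elemCob (d : GZ t) g h else 1))ᵀ =
        (4 * t : ℤ) • (1 : Matrix (GZ t) (GZ t) ℤ) := by
  change _ ↔ _ ∧ of (GZ.psiZ a) * (of (GZ.psiZ a))ᵀ = _
  have hcard : (4 * t : ℤ) = Fintype.card (GZ t) := by simp [mul_comm]
  rw [hcard, (GZ.isNormalizedCocycle_psiZ a).mul_transpose_eq_card_smul_one_iff,
    GZ.forall_mem_idealZ_eval_eq_zero_iff]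
  exact and_congr_right (GZ.forall_eval_rowPolyZ_iff htodd)

/-- a point lies in `V(J)` iff it is a `{0,1}`-tuple whose associated
cocyclic matrix over `ℤ_t × ℤ_2 × ℤ_2` is Hadamard. -/
theorem mem_variety_idealZ_iff (t : ℕ) [NeZero t] (ht : 1 < t) (htodd : Odd t)
    (a : {d : GZ t // d ∈ SZ t} → ℚ) :
    (∀ p ∈ idealZ t, eval a p = 0) ↔
      (∀ d, a d = 0 ∨ a d = 1) ∧
      (Matrix.of fun g h : GZ t =>
            rhoZ t g h *
              ∏ d : {d : GZ t // d ∈ SZ t}, (if a d = 1 then elemCob (d : GZ t) g h else 1)) *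
          (Matrix.of fun g h : GZ t =>
            rhoZ t g h *
              ∏ d : {d : GZ t // d ∈ SZ t}, (if a d = 1 then elemCob (d : GZ t) g h else 1))ᵀ =
        (4 * t : ℤ) • (1 : Matrix (GZ t) (GZ t) ℤ) :=
  mem_variety_idealZ_iff_general t htodd a
end

section
/- Let t > 1 be odd, G = ℤ_t × ℤ_2 × ℤ_2 indexed by ι(k) = (⌊(k−1)/4⌋ mod t, ⌊((k−1) mod 4)/2⌋ mod 2, (k−1) mod 2), ρ((a,b,c),(a',b',c')) = (−1)^{b·b' + b·c' + c·c'}, and S = G ∖ {(0,0,0), (t−1,1,0), (t−1,1,1)}. Let J ⊆ ℚ[x_d : d ∈ S] be the ideal generated by x_d² − x_d for d ∈ S together with, for each s ∈ {5,…,2t+2}, the polynomial Σ_{h∈G} ρ(ι(s),h) · ∏_{d ∈ S ∩ {h, ι(s)·h}} (1 − 2x_d). Then the number of tuples (x_d)_{d∈S} ∈ {0,1}^S for which the cocyclic matrix of ψ(g,h) = ρ(g,h)·∏_{d∈S} ∂_d(g,h)^{x_d} is Hadamard equals the dimension of ℚ[x_d : d ∈ S]/J as a ℚ-vector space. -/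
open Matrix MvPolynomial

/-!
Over a field, the ideal generated by the relations `x_d² = x_d` and a set `F` of polynomials
is the ideal of all polynomials vanishing on the common zeros of `F` in `{0,1}^S` (by the
combinatorial Nullstellensatz), so the quotient is the algebra of functions on that finite
set, of dimension its cardinality.

On the matrix side, for a binary cocycle `ψ` the inner product of rows `g` and `k` is `±` the
row sum at `g - k`, so `M Mᵀ = |G| I` iff every row `g ≠ 0` sums to zero, and the rows `g`
and `-g` vanish together. For `ψ = ρ ∏ ∂_d^{x_d}`, a row with trivial `ℤ_t`-component sums to
zero automatically, since `h ↦ h + g` flips the sign of `ρ(g, ·)` and fixes every `∂_d(g, ·)`.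
For `g ≠ 0`, `∂_d(g,h) = δ_d(g) · (-1)^[d ∈ {h, g+h}]` and `(-1)^x = 1 - 2x` on `{0,1}`, so
the row sum at `ι(s)` is `±` the `s`-th row polynomial evaluated at `x`. As `t` is odd, the
indices `5 ≤ s ≤ 2t+2` reach one of `g`, `-g` for every `g` with nonzero `ℤ_t`-component.
-/

def booleanRelations (σ K : Type*) [CommRing K] : Set (MvPolynomial σ K) :=
  {p | ∃ i, p = X i ^ 2 - X i}

section BooleanCube

variable {σ K : Type*} [Field K]

def cubePoint (b : σ → Bool) : σ → K := fun i => ((b i).toNat : K)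

noncomputable def cubeIndicator [Fintype σ] (b : σ → Bool) : MvPolynomial σ K :=
  ∏ i, if b i then X i else 1 - X i

theorem span_booleanRelations_le_ker_eval (b : σ → Bool) :
    Ideal.span (booleanRelations σ K) ≤ RingHom.ker (eval (cubePoint b)) := by
  rw [Ideal.span_le]
  rintro _ ⟨i, rfl⟩
  simp only [SetLike.mem_coe, RingHom.mem_ker, map_sub, map_pow, eval_X, cubePoint]
  cases b i <;> simp

theorem mem_span_booleanRelations_of_eval_eq_zero [Finite σ] {f : MvPolynomial σ K}
    (hf : ∀ b, eval (cubePoint b) f = 0) : f ∈ Ideal.span (booleanRelations σ K) := by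
  classical
  obtain ⟨c, -, rfl⟩ := combinatorial_nullstellensatz_exists_linearCombination
    (fun _ => {0, 1}) (fun _ => Finset.insert_nonempty _ _) f fun x hx => by
      have hx01 : x = cubePoint fun i => decide (x i = 1) := funext fun i => by
        rcases Finset.mem_insert.mp (hx i) with h | h <;> simp_all [cubePoint]
      rw [hx01]
      exact hf _
  rw [Finsupp.linearCombination_apply]
  refine Ideal.sum_mem _ fun i _ => Ideal.mul_mem_left _ _ (Ideal.subset_span ⟨i, ?_⟩)
  rw [Finset.prod_pair zero_ne_one]
  simp only [map_zero, sub_zero, map_one]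
  ring

variable [Fintype σ]

theorem eval_cubePoint_cubeIndicator (b b' : σ → Bool) :
    eval (cubePoint b') (cubeIndicator b : MvPolynomial σ K) = if b' = b then 1 else 0 := by
  classical
  have factor (i : σ) : eval (cubePoint b') (if b i then X i else 1 - X i : MvPolynomial σ K) =
      if b' i = b i then 1 else 0 := by
    cases b i <;> cases h : b' i <;> simp [cubePoint, h]
  simp only [cubeIndicator, map_prod, factor, Finset.prod_boole, Finset.mem_univ, true_implies]
  exact if_congr funext_iff.symm rfl rfl

variable {F : Set (MvPolynomial σ K)}

theorem cubeIndicator_mem_of_eval_ne_zero {b : σ → Bool} {f : MvPolynomial σ K} (hfF : f ∈ F)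
    (hf : eval (cubePoint b) f ≠ 0) :
    cubeIndicator b ∈ Ideal.span (booleanRelations σ K ∪ F) := by
  set J := Ideal.span (booleanRelations σ K ∪ F)
  have hsq : f * cubeIndicator b - C (eval (cubePoint b) f) * cubeIndicator b ∈ J := by
    refine Ideal.span_mono Set.subset_union_left
      (mem_span_booleanRelations_of_eval_eq_zero fun b' => ?_)
    by_cases h : b' = b
    · subst h; simp [eval_cubePoint_cubeIndicator]
    · simp [eval_cubePoint_cubeIndicator, h]
  have hfb : f * cubeIndicator b ∈ J :=
    J.mul_mem_right _ (Ideal.subset_span (Set.mem_union_right _ hfF))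
  have hC := J.mul_mem_left (C (eval (cubePoint b) f)⁻¹) (by simpa using J.sub_mem hfb hsq)
  rwa [← mul_assoc, ← C_mul, inv_mul_cancel₀ hf, C_1, one_mul] at hC

variable [DecidableEq σ]

theorem sub_sum_cubeIndicator_mem (f : MvPolynomial σ K) :
    f - ∑ b, C (eval (cubePoint b) f) * cubeIndicator b ∈ Ideal.span (booleanRelations σ K) :=
  mem_span_booleanRelations_of_eval_eq_zero fun b' => by
    simp [eval_cubePoint_cubeIndicator]

theorem mem_span_booleanRelations_union_iff {f : MvPolynomial σ K} :
    f ∈ Ideal.span (booleanRelations σ K ∪ F) ↔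
      ∀ b, (∀ g ∈ F, eval (cubePoint b) g = 0) → eval (cubePoint b) f = 0 := by
  constructor
  · intro hf b hb
    suffices Ideal.span (booleanRelations σ K ∪ F) ≤ RingHom.ker (eval (cubePoint b)) from
      this hf
    rw [Ideal.span_union]
    exact sup_le (span_booleanRelations_le_ker_eval b) (Ideal.span_le.mpr hb)
  · intro hf
    rw [← sub_add_cancel f (∑ b, C (eval (cubePoint b) f) * cubeIndicator b)]
    refine Ideal.add_mem _ (Ideal.span_mono Set.subset_union_left (sub_sum_cubeIndicator_mem f))
      (Ideal.sum_mem _ fun b _ => ?_)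
    by_cases hb : ∀ g ∈ F, eval (cubePoint b) g = 0
    · simp [hf b hb]
    · push Not at hb
      obtain ⟨g, hgF, hg⟩ := hb
      exact Ideal.mul_mem_left _ _ (cubeIndicator_mem_of_eval_ne_zero hgF hg)

theorem finrank_quotient_span_booleanRelations_union (F : Set (MvPolynomial σ K)) :
    Module.finrank K (MvPolynomial σ K ⧸ Ideal.span (booleanRelations σ K ∪ F)) =
      Nat.card {b : σ → Bool // ∀ f ∈ F, eval (cubePoint b) f = 0} := by
  classical
  let Z := {b : σ → Bool // ∀ f ∈ F, eval (cubePoint b) f = 0}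
  let Φ : MvPolynomial σ K →ₐ[K] Z → K := AlgHom.pi fun z => aeval (cubePoint z.1)
  have hΦ (f : MvPolynomial σ K) (z : Z) : Φ f z = eval (cubePoint z.1) f := by
    simp [Φ, aeval_eq_eval]
  have hker : RingHom.ker Φ = Ideal.span (booleanRelations σ K ∪ F) := by
    ext f
    rw [RingHom.mem_ker, mem_span_booleanRelations_union_iff, funext_iff]
    simp [hΦ, Z]
  have hsurj : Function.Surjective Φ := fun u => ⟨∑ z, C (u z) * cubeIndicator z.1, by
    ext z'
    simp only [hΦ, map_sum, map_mul, eval_C, eval_cubePoint_cubeIndicator, ← Subtype.ext_iff,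
      mul_ite, mul_one, mul_zero]
    convert Fintype.sum_ite_eq z' u⟩
  rw [← hker, (Ideal.quotientKerAlgEquivOfSurjective hsurj).toLinearEquiv.finrank_eq,
    Module.finrank_fintype_fun_eq_card, Nat.card_eq_fintype_card]

end BooleanCube

structure IsBinaryCocycle {A : Type*} [Add A] (ψ : A → A → ℤ) : Prop where
  mul_self : ∀ g h, ψ g h * ψ g h = 1
  cocycle : ∀ g h k, ψ g h * ψ (g + h) k = ψ h k * ψ g (h + k)

namespace IsBinaryCocycle

section Add

variable {A : Type*} [Add A] {ψ φ : A → A → ℤ}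

theorem ne_zero (hψ : IsBinaryCocycle ψ) (g h : A) : ψ g h ≠ 0 :=
  left_ne_zero_of_mul_eq_one (hψ.mul_self g h)

theorem mul (hψ : IsBinaryCocycle ψ) (hφ : IsBinaryCocycle φ) :
    IsBinaryCocycle fun g h => ψ g h * φ g h where
  mul_self g h := by rw [mul_mul_mul_comm, hψ.mul_self, hφ.mul_self, one_mul]
  cocycle g h k := by rw [mul_mul_mul_comm, hψ.cocycle, hφ.cocycle, mul_mul_mul_comm]

theorem pow (hψ : IsBinaryCocycle ψ) (n : ℕ) : IsBinaryCocycle fun g h => ψ g h ^ n where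
  mul_self g h := by rw [← mul_pow, hψ.mul_self, one_pow]
  cocycle g h k := by rw [← mul_pow, hψ.cocycle, mul_pow]

theorem prod {ι : Type*} (s : Finset ι) {ψ : ι → A → A → ℤ}
    (hψ : ∀ i ∈ s, IsBinaryCocycle (ψ i)) : IsBinaryCocycle fun g h => ∏ i ∈ s, ψ i g h where
  mul_self g h := by
    rw [← Finset.prod_mul_distrib]
    exact Finset.prod_eq_one fun i hi => (hψ i hi).mul_self g h
  cocycle g h k := by
    simp only [← Finset.prod_mul_distrib]
    exact Finset.prod_congr rfl fun i hi => (hψ i hi).cocycle g h k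

end Add

variable {A : Type*} [AddGroup A] [Fintype A] {ψ : A → A → ℤ}

theorem sum_mul_eq_mul_sum (hψ : IsBinaryCocycle ψ) (g k : A) :
    ∑ h, ψ g h * ψ k h = ψ (g - k) k * ∑ h, ψ (g - k) h := by
  have term (h : A) : ψ g h * ψ k h = ψ (g - k) k * ψ (g - k) (k + h) := by
    have hc := hψ.cocycle (g - k) k h
    rw [sub_add_cancel] at hc
    linear_combination (ψ (g - k) k * ψ k h) * hc - (ψ g h * ψ k h) * hψ.mul_self (g - k) k +
      (ψ (g - k) k * ψ (g - k) (k + h)) * hψ.mul_self k h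
  rw [Finset.sum_congr rfl fun h _ => term h, ← Finset.mul_sum]
  exact congrArg _ (Fintype.sum_equiv (Equiv.addLeft k) _ _ fun _ => rfl)

theorem sum_neg_eq_zero_iff (hψ : IsBinaryCocycle ψ) (g : A) :
    ∑ h, ψ (-g) h = 0 ↔ ∑ h, ψ g h = 0 := by
  have key : ψ (-g) g * ∑ h, ψ (-g) h = ψ g 0 * ∑ h, ψ g h :=
    calc ψ (-g) g * ∑ h, ψ (-g) h = ∑ h, ψ 0 h * ψ g h := by
          rw [hψ.sum_mul_eq_mul_sum, zero_sub]
      _ = ∑ h, ψ g h * ψ 0 h := Finset.sum_congr rfl fun h _ => mul_comm _ _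
      _ = ψ g 0 * ∑ h, ψ g h := by rw [hψ.sum_mul_eq_mul_sum, sub_zero]
  rw [← mul_eq_zero_iff_left (hψ.ne_zero (-g) g), key, mul_eq_zero_iff_left (hψ.ne_zero g 0)]

variable [DecidableEq A]

theorem mul_transpose_eq_smul_one_iff (hψ : IsBinaryCocycle ψ) :
    of ψ * (of ψ)ᵀ = (Fintype.card A : ℤ) • (1 : Matrix A A ℤ) ↔ ∀ g ≠ 0, ∑ h, ψ g h = 0 := by
  have entry (g k : A) : (of ψ * (of ψ)ᵀ) g k = ψ (g - k) k * ∑ h, ψ (g - k) h := by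
    simp [Matrix.mul_apply, hψ.sum_mul_eq_mul_sum]
  constructor
  · intro H g hg
    have := congrFun (congrFun H g) 0
    rwa [entry, sub_zero, Matrix.smul_apply, Matrix.one_apply_ne hg, smul_zero,
      mul_eq_zero_iff_left (hψ.ne_zero g 0)] at this
  · intro H
    ext g k
    by_cases hgk : g = k
    · subst hgk
      simp [Matrix.mul_apply, hψ.mul_self]
    · rw [entry, H _ (sub_ne_zero.mpr hgk), Matrix.smul_apply, Matrix.one_apply_ne hgk,
        smul_zero, mul_zero]

end IsBinaryCocycle

theorem isBinaryCocycle_elemCob {A : Type*} [AddGroup A] [DecidableEq A] (d : A) :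
    IsBinaryCocycle (elemCob d) where
  mul_self g h := by unfold elemCob charMap; split_ifs <;> rfl
  cocycle g h k := by unfold elemCob charMap; rw [← add_assoc]; split_ifs <;> rfl

theorem Function.Antiperiodic.sum_eq_zero {A : Type*} [AddGroup A] [Fintype A] {f : A → ℤ}
    {c : A} (hf : Function.Antiperiodic f c) : ∑ a, f a = 0 := by
  have h : ∑ a, f (a + c) = ∑ a, f a := Fintype.sum_equiv (Equiv.addRight c) _ _ fun _ => rfl
  simp only [hf _, Finset.sum_neg_distrib] at h
  linarith

theorem elemCob_add_right_of_add_self {A : Type*} [AddCommGroup A] [DecidableEq A] {g : A}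
    (hg : g + g = 0) (d h : A) : elemCob d g (h + g) = elemCob d g h := by
  have : g + (h + g) = h := by rw [add_comm h, ← add_assoc, hg, zero_add]
  rw [elemCob, elemCob, this, add_comm h g]
  ring

theorem elemCob_eq_of_ne {A : Type*} [AddGroup A] [DecidableEq A] {g h : A} (hgh : h ≠ g + h)
    (d : A) : elemCob d g h = charMap d g * if d = h ∨ d = g + h then -1 else 1 := by
  unfold elemCob charMap
  by_cases h1 : h = d
  · subst h1
    simp [Ne.symm hgh]
  · by_cases h2 : g + h = d
    · subst h2
      simp [h1]
    · simp [h1, h2, Ne.symm h1, Ne.symm h2]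

theorem ZMod.two_mul_val_lt_or_two_mul_neg_val_lt {t : ℕ} [NeZero t] (ht : Odd t) {a : ZMod t}
    (ha : a ≠ 0) : 2 * a.val < t ∨ 2 * (-a).val < t := by
  rw [ZMod.neg_val, if_neg ha]
  have := a.val_lt
  obtain ⟨m, rfl⟩ := ht
  omega

def klein4Cocycle (u v : ZMod 2 × ZMod 2) : ℤ :=
  (-1) ^ (u.1.val * v.1.val + u.1.val * v.2.val + u.2.val * v.2.val)

theorem isBinaryCocycle_klein4Cocycle : IsBinaryCocycle klein4Cocycle where
  mul_self := by decide
  cocycle := by decide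

theorem klein4Cocycle_add_right_self : ∀ u v : ZMod 2 × ZMod 2, u ≠ 0 →
    klein4Cocycle u (v + u) = -klein4Cocycle u v := by
  decide

section GZ

variable {t : ℕ}

theorem rhoZ_eq_klein4Cocycle (p q : GZ t) : rhoZ t p q = klein4Cocycle p.2 q.2 := rfl

theorem isBinaryCocycle_rhoZ : IsBinaryCocycle (rhoZ t) where
  mul_self g h := isBinaryCocycle_klein4Cocycle.mul_self g.2 h.2
  cocycle g h k := isBinaryCocycle_klein4Cocycle.cocycle g.2 h.2 k.2

variable [NeZero t]

theorem card_GZ : Fintype.card (GZ t) = 4 * t := by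
  simp only [Fintype.card_prod, ZMod.card]
  ring

theorem iota_ne_zero {s : ℕ} (h5 : 5 ≤ s) (hs : s ≤ 2 * t + 2) : iota t s ≠ 0 := by
  intro h
  have hdvd : t ∣ (s - 1) / 4 := (ZMod.natCast_eq_zero_iff _ _).mp (congrArg Prod.fst h)
  have := Nat.eq_zero_of_dvd_of_lt hdvd (by have := NeZero.pos t; omega)
  omega

theorem exists_iota_eq {g : GZ t} (hg : g.1 ≠ 0) (h2 : 2 * g.1.val < t) :
    ∃ s, 5 ≤ s ∧ s ≤ 2 * t + 2 ∧ iota t s = g := by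
  have ha : g.1.val ≠ 0 := (ZMod.val_ne_zero g.1).mpr hg
  have hb := g.2.1.val_lt
  have hc := g.2.2.val_lt
  refine ⟨4 * g.1.val + 2 * g.2.1.val + g.2.2.val + 1, by omega, by omega, ?_⟩
  have e1 : (4 * g.1.val + 2 * g.2.1.val + g.2.2.val + 1 - 1) / 4 = g.1.val := by omega
  have e2 : (4 * g.1.val + 2 * g.2.1.val + g.2.2.val + 1 - 1) % 4 / 2 = g.2.1.val := by omega
  have e3 : (4 * g.1.val + 2 * g.2.1.val + g.2.2.val + 1 - 1) % 2 = g.2.2.val := by omega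
  simp only [iota, e1, e2, e3, ZMod.natCast_zmod_val]

theorem eval_rowPolyZ (y : {d : GZ t // d ∈ SZ t} → ℚ) (s : ℕ) :
    eval y (rowPolyZ t s) = ∑ h, (rhoZ t (iota t s) h : ℚ) *
      ∏ d : {d : GZ t // d ∈ SZ t}, if (d : GZ t) = h ∨ (d : GZ t) = iota t s + h
        then 1 - 2 * y d else 1 := by
  simp [rowPolyZ, apply_ite]

variable (x : {d : GZ t // d ∈ SZ t} → ℕ)

def psiZ (g h : GZ t) : ℤ :=
  rhoZ t g h * ∏ d : {d : GZ t // d ∈ SZ t}, elemCob (d : GZ t) g h ^ x d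

theorem isBinaryCocycle_psiZ : IsBinaryCocycle (psiZ x) :=
  isBinaryCocycle_rhoZ.mul (IsBinaryCocycle.prod _ fun _ _ => (isBinaryCocycle_elemCob _).pow _)

theorem psiZ_antiperiodic {g : GZ t} (hg1 : g.1 = 0) (hg : g ≠ 0) :
    Function.Antiperiodic (psiZ x g) g := by
  have hg2 : g.2 ≠ 0 := fun h => hg (Prod.ext hg1 h)
  have hgg : g + g = 0 := Prod.ext (by simp [hg1]) (CharTwo.add_self_eq_zero g.2)
  intro h
  simp only [psiZ, rhoZ_eq_klein4Cocycle, Prod.snd_add, klein4Cocycle_add_right_self g.2 h.2 hg2,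
    elemCob_add_right_of_add_self hgg, neg_mul]

theorem forall_sum_psiZ_eq_zero_iff (ht : Odd t) :
    (∀ g ≠ 0, ∑ h, psiZ x g h = 0) ↔
      ∀ s, 5 ≤ s → s ≤ 2 * t + 2 → ∑ h, psiZ x (iota t s) h = 0 := by
  refine ⟨fun H s h5 hs => H _ (iota_ne_zero h5 hs), fun H g hg => ?_⟩
  have half {g : GZ t} (hg1 : g.1 ≠ 0) (h2 : 2 * g.1.val < t) : ∑ h, psiZ x g h = 0 := by
    obtain ⟨s, h5, hs, rfl⟩ := exists_iota_eq hg1 h2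
    exact H s h5 hs
  by_cases hg1 : g.1 = 0
  · exact (psiZ_antiperiodic x hg1 hg).sum_eq_zero
  rcases ZMod.two_mul_val_lt_or_two_mul_neg_val_lt ht hg1 with h2 | h2
  · exact half hg1 h2
  · rw [← (isBinaryCocycle_psiZ x).sum_neg_eq_zero_iff]
    exact half (neg_ne_zero.mpr hg1) h2

variable {x}

theorem cast_sum_psiZ_eq (hx : ∀ d, x d = 0 ∨ x d = 1) {g : GZ t} (hg : g ≠ 0) :
    ((∑ h, psiZ x g h : ℤ) : ℚ) =
      (∏ d : {d : GZ t // d ∈ SZ t}, (charMap (d : GZ t) g : ℚ) ^ x d) *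
        ∑ h, (rhoZ t g h : ℚ) * ∏ d : {d : GZ t // d ∈ SZ t},
          if (d : GZ t) = h ∨ (d : GZ t) = g + h then 1 - 2 * (x d : ℚ) else 1 := by
  have factor (h : GZ t) (d : {d : GZ t // d ∈ SZ t}) :
      ((elemCob (d : GZ t) g h ^ x d : ℤ) : ℚ) = (charMap (d : GZ t) g : ℚ) ^ x d *
        if (d : GZ t) = h ∨ (d : GZ t) = g + h then 1 - 2 * (x d : ℚ) else 1 := by
    rw [elemCob_eq_of_ne (fun e => hg (by simpa using e.symm))]
    rcases hx d with h0 | h1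
    · simp [h0]
    · rw [h1]; split_ifs <;> push_cast <;> ring
  simp only [psiZ, Int.cast_sum, Int.cast_mul, Int.cast_prod, factor, Finset.prod_mul_distrib,
    Finset.mul_sum]
  exact Finset.sum_congr rfl fun h _ => by ring

theorem sum_psiZ_iota_eq_zero_iff (hx : ∀ d, x d = 0 ∨ x d = 1) {s : ℕ} (h5 : 5 ≤ s)
    (hs : s ≤ 2 * t + 2) :
    ∑ h, psiZ x (iota t s) h = 0 ↔ eval (fun d => (x d : ℚ)) (rowPolyZ t s) = 0 := by
  have hc : ∏ d : {d : GZ t // d ∈ SZ t}, (charMap (d : GZ t) (iota t s) : ℚ) ^ x d ≠ 0 :=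
    Finset.prod_ne_zero_iff.mpr fun _ _ =>
      pow_ne_zero _ (by unfold charMap; split_ifs <;> norm_num)
  rw [← Int.cast_eq_zero (α := ℚ), cast_sum_psiZ_eq hx (iota_ne_zero h5 hs), eval_rowPolyZ,
    mul_eq_zero_iff_left hc]

theorem psiZ_mul_transpose_eq_iff (ht : Odd t) (hx : ∀ d, x d = 0 ∨ x d = 1) :
    of (psiZ x) * (of (psiZ x))ᵀ = (4 * t : ℤ) • (1 : Matrix (GZ t) (GZ t) ℤ) ↔
      ∀ s, 5 ≤ s → s ≤ 2 * t + 2 → eval (fun d => (x d : ℚ)) (rowPolyZ t s) = 0 := by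
  have hcard : (4 * t : ℤ) = Fintype.card (GZ t) := by rw [card_GZ]; push_cast; rfl
  rw [hcard, (isBinaryCocycle_psiZ x).mul_transpose_eq_smul_one_iff,
    forall_sum_psiZ_eq_zero_iff x ht]
  exact forall₃_congr fun s h5 hs => sum_psiZ_iota_eq_zero_iff hx h5 hs

end GZ

theorem natCard_zero_one_tuples_eq {ι : Type*} (P : (ι → ℕ) → Prop) :
    Nat.card {x : ι → ℕ // (∀ i, x i = 0 ∨ x i = 1) ∧ P x} =
      Nat.card {b : ι → Bool // P fun i => (b i).toNat} := by
  have toNat_decide {x : ι → ℕ} (hx : ∀ i, x i = 0 ∨ x i = 1) :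
      (fun i => (decide (x i = 1)).toNat) = x :=
    funext fun i => by rcases hx i with h | h <;> simp [h]
  exact Nat.card_congr
    { toFun x := ⟨fun i => decide (x.1 i = 1), by rw [toNat_decide x.2.1]; exact x.2.2⟩
      invFun b := ⟨fun i => (b.1 i).toNat, fun i => by cases b.1 i <;> simp, b.2⟩
      left_inv x := Subtype.ext (toNat_decide x.2.1)
      right_inv b := Subtype.ext (funext fun i => by cases h : b.1 i <;> simp [h]) }

theorem card_hadamard_tuples_Z_eq_finrank_general (t : ℕ) [NeZero t] (htodd : Odd t) :
    Nat.card {x : {d : GZ t // d ∈ SZ t} → ℕ //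
        (∀ d, x d = 0 ∨ x d = 1) ∧
        (Matrix.of fun g h : GZ t =>
              rhoZ t g h *
                ∏ d : {d : GZ t // d ∈ SZ t}, elemCob (d : GZ t) g h ^ x d) *
            (Matrix.of fun g h : GZ t =>
              rhoZ t g h *
                ∏ d : {d : GZ t // d ∈ SZ t}, elemCob (d : GZ t) g h ^ x d)ᵀ =
          (4 * t : ℤ) • (1 : Matrix (GZ t) (GZ t) ℤ)} =
      Module.finrank ℚ (MvPolynomial {d : GZ t // d ∈ SZ t} ℚ ⧸ idealZ t) := by
  rw [natCard_zero_one_tuples_eq]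
  refine Eq.trans ?_ (finrank_quotient_span_booleanRelations_union _).symm
  refine Nat.card_congr (Equiv.subtypeEquivRight fun b => ?_)
  refine (psiZ_mul_transpose_eq_iff htodd fun d => ?_).trans ?_
  · cases b d <;> simp
  · exact ⟨fun H _ ⟨s, h5, hs, hf⟩ => hf ▸ H s h5 hs, fun H s h5 hs => H _ ⟨s, h5, hs, rfl⟩⟩

/-- the number of `{0,1}`-tuples whose associated cocyclic matrix over
`ℤ_t × ℤ_2 × ℤ_2` is Hadamard equals `dim_ℚ (ℚ[x_d : d ∈ S]/J)`. -/
theorem card_hadamard_tuples_Z_eq_finrank (t : ℕ) [NeZero t] (ht : 1 < t) (htodd : Odd t) :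
    Nat.card {x : {d : GZ t // d ∈ SZ t} → ℕ //
        (∀ d, x d = 0 ∨ x d = 1) ∧
        (Matrix.of fun g h : GZ t =>
              rhoZ t g h *
                ∏ d : {d : GZ t // d ∈ SZ t}, elemCob (d : GZ t) g h ^ x d) *
            (Matrix.of fun g h : GZ t =>
              rhoZ t g h *
                ∏ d : {d : GZ t // d ∈ SZ t}, elemCob (d : GZ t) g h ^ x d)ᵀ =
          (4 * t : ℤ) • (1 : Matrix (GZ t) (GZ t) ℤ)} =
      Module.finrank ℚ (MvPolynomial {d : GZ t // d ∈ SZ t} ℚ ⧸ idealZ t) :=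
  card_hadamard_tuples_Z_eq_finrank_general t htodd
end
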